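/- arXiv:2306.02001 — 2 statements merged into one kernel-verified Lean document; each statement's English description precedes it below -/
import Mathlib

section
/- Let g, h be convex differentiable functions and C a set with x^{(k+1)} minimizing g(x) - ⟨∇h(x^{(k)}), x⟩ over C. If for f = g - h there is μ > 0 such that μ(f(x) - f(x*)) ≤ d_{h*}(∇g(x) + y, ∇h(x)) holds for the particular normal-cone vector y arising from the optimality condition of the update, then f(x^{(k+1)}) - f(x*) ≤ (1/(1+μ))(f(x^{(k)}) - f(x*)). -/
/-!
The PL right-hand side `d_{h*}(∇h(xᵏ), ∇h(xᵏ⁺¹))` equals, by the Fenchel identity, the Bregman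
distance `d_h(xᵏ⁺¹, xᵏ)`. Comparing the DCA subproblem at `xᵏ⁺¹` with its value at `xᵏ` shows
that this Bregman distance is at most the decrease `f(xᵏ) - f(xᵏ⁺¹)`. Hence
`μ (f(xᵏ⁺¹) - f*) ≤ f(xᵏ) - f(xᵏ⁺¹)`, which rearranges to the linear rate `1 / (1 + μ)`.
-/

open RealInnerProductSpace

variable {E : Type*} [NormedAddCommGroup E] [InnerProductSpace ℝ E]

def bregmanDist (φ : E → ℝ) (φ' : E → E) (u v : E) : ℝ :=
  φ u - φ v - ⟪φ' v, u - v⟫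

/-- Since `∇h*(∇h(x)) = x`, the left-hand side is `d_{h*}(∇h(u), ∇h(v))`. -/
theorem conjugate_bregmanDist_eq {h hstar : E → ℝ} {h' : E → E}
    (hFenchel : ∀ x, hstar (h' x) = ⟪h' x, x⟫ - h x) (u v : E) :
    hstar (h' u) - hstar (h' v) - ⟪v, h' u - h' v⟫ = bregmanDist h h' v u := by
  simp only [bregmanDist, hFenchel, inner_sub_right, real_inner_comm v]
  ring

theorem bregmanDist_le_sub_of_dca_step {g h : E → ℝ} {h' : E → E} {x y : E}
    (hstep : g y - ⟪h' x, y⟫ ≤ g x - ⟪h' x, x⟫) :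
    bregmanDist h h' y x ≤ (g x - h x) - (g y - h y) := by
  rw [bregmanDist, inner_sub_right]
  linarith

theorem dca_linear_descent_general {d : ℕ}
    (g h : EuclideanSpace ℝ (Fin d) → ℝ)
    (g' h' : EuclideanSpace ℝ (Fin d) → EuclideanSpace ℝ (Fin d))
    (C : Set (EuclideanSpace ℝ (Fin d)))
    (xk xk1 xstar : EuclideanSpace ℝ (Fin d))
    (hxk : xk ∈ C)
    -- xk1 minimizes g(x) - ⟨∇h(xk), x⟩ over C
    (hupd : ∀ x ∈ C, g xk1 - ⟪h' xk, xk1⟫ ≤ g x - ⟪h' xk, x⟫)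
    -- optimality condition: ∇h(xk) = ∇g(xk1) + ŷ with ŷ in the normal cone at xk1
    (yhat : EuclideanSpace ℝ (Fin d))
    (hyhat : h' xk = g' xk1 + yhat)
    -- hstar is the convex conjugate of h, via the Fenchel identity
    (hstar : EuclideanSpace ℝ (Fin d) → ℝ)
    (hFenchel : ∀ x, hstar (h' x) = ⟪h' x, x⟫ - h x)
    (μ : ℝ) (hμ : 0 < μ)
    -- extended PL inequality at xk1 for the particular normal-cone vector ŷ
    (hPL : μ * ((g xk1 - h xk1) - (g xstar - h xstar)) ≤
      hstar (g' xk1 + yhat) - hstar (h' xk1) - ⟪xk1, (g' xk1 + yhat) - h' xk1⟫) :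
    (g xk1 - h xk1) - (g xstar - h xstar) ≤
      (1 / (1 + μ)) * ((g xk - h xk) - (g xstar - h xstar)) := by
  rw [← hyhat, conjugate_bregmanDist_eq hFenchel] at hPL
  have hdecrease := bregmanDist_le_sub_of_dca_step (h := h) (hupd xk hxk)
  rw [div_mul_eq_mul_div, one_mul, le_div_iff₀ (by linarith)]
  linarith

/-- DCA descent under the extended PL condition (Theorem 3.2 of the paper).
`g`, `h` convex differentiable with gradients `g'`, `h'`; `xk1` is the DCA
update from `xk`; `ŷ` is the normal-cone vector from the optimality condition;
`hstar` is the convex conjugate of `h` (via the Fenchel identity); the PL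
inequality holds for this particular `ŷ`. -/
theorem dca_linear_descent {d : ℕ}
    (g h : EuclideanSpace ℝ (Fin d) → ℝ)
    (g' h' : EuclideanSpace ℝ (Fin d) → EuclideanSpace ℝ (Fin d))
    (hg : ∀ x, HasGradientAt g (g' x) x)
    (hh : ∀ x, HasGradientAt h (h' x) x)
    (hgconv : ConvexOn ℝ Set.univ g)
    (hhconv : ConvexOn ℝ Set.univ h)
    (C : Set (EuclideanSpace ℝ (Fin d))) (hC : Convex ℝ C)
    (xk xk1 xstar : EuclideanSpace ℝ (Fin d))
    (hxk : xk ∈ C) (hxk1 : xk1 ∈ C) (hxstar : xstar ∈ C)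
    -- xk1 minimizes g(x) - ⟨∇h(xk), x⟩ over C
    (hupd : ∀ x ∈ C, g xk1 - ⟪h' xk, xk1⟫ ≤ g x - ⟪h' xk, x⟫)
    -- xstar is the global minimizer of f = g - h over C
    (hglob : ∀ x ∈ C, g xstar - h xstar ≤ g x - h x)
    -- optimality condition: ∇h(xk) = ∇g(xk1) + ŷ with ŷ in the normal cone at xk1
    (yhat : EuclideanSpace ℝ (Fin d))
    (hyhat : h' xk = g' xk1 + yhat)
    (hnormal : ∀ x ∈ C, ⟪yhat, x - xk1⟫ ≤ 0)
    -- hstar is the convex conjugate of h, via the Fenchel identity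
    (hstar : EuclideanSpace ℝ (Fin d) → ℝ)
    (hFenchel : ∀ x, hstar (h' x) = ⟪h' x, x⟫ - h x)
    (μ : ℝ) (hμ : 0 < μ)
    -- extended PL inequality at xk1 for the particular normal-cone vector ŷ
    (hPL : μ * ((g xk1 - h xk1) - (g xstar - h xstar)) ≤
      hstar (g' xk1 + yhat) - hstar (h' xk1) - ⟪xk1, (g' xk1 + yhat) - h' xk1⟫) :
    (g xk1 - h xk1) - (g xstar - h xstar) ≤
      (1 / (1 + μ)) * ((g xk - h xk) - (g xstar - h xstar)) :=
  dca_linear_descent_general g h g' h' C xk xk1 xstar hxk hupd yhat hyhat hstar hFenchel μ hμ hPL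
end

section
/- Consider minimizing X ↦ -log det(X + Σ) + ⟨A, X⟩ over X ⪰ 0, where A, Σ are symmetric positive definite n×n matrices. If Σ^{1/2} A Σ^{1/2} = Q Λ Q^T is an eigendecomposition with eigenvalues λ_1 ≥ ... ≥ λ_n > 0, then the optimal solution is X* = Σ^{1/2} Q ψ(Λ) Q^T Σ^{1/2}, where ψ(γ) = max{(1-γ)/γ, 0} is applied entrywise to the diagonal of Λ. -/
open Matrix

private lemma trace_eq_sum_eigs {n : ℕ} {M : Matrix (Fin n) (Fin n) ℝ} (hM : M.IsHermitian) :
    M.trace = ∑ i, hM.eigenvalues i := by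
  conv_lhs => rw [hM.spectral_theorem]
  rw [Unitary.conjStarAlgAut_apply, trace_mul_cycle]
  have h1 : (star (IsHermitian.eigenvectorUnitary hM : Matrix (Fin n) (Fin n) ℝ)) *
      (IsHermitian.eigenvectorUnitary hM : Matrix (Fin n) (Fin n) ℝ) = 1 := by
    exact_mod_cast Unitary.coe_star_mul_self (IsHermitian.eigenvectorUnitary hM)
  rw [h1, one_mul, trace_diagonal]
  simp

private lemma logdet_le_trace {n : ℕ} {M : Matrix (Fin n) (Fin n) ℝ} (hM : M.PosDef) :
    Real.log M.det ≤ M.trace - n := by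
  have he := hM.isHermitian
  have hdet : M.det = ∏ i, he.eigenvalues i := by
    simpa using he.det_eq_prod_eigenvalues
  rw [hdet, trace_eq_sum_eigs he,
    Real.log_prod (fun i _ => (hM.eigenvalues_pos i).ne')]
  have h : ∀ i ∈ Finset.univ, Real.log (he.eigenvalues i) ≤ he.eigenvalues i - 1 :=
    fun i _ => Real.log_le_sub_one_of_pos (hM.eigenvalues_pos i)
  calc ∑ i, Real.log (he.eigenvalues i) ≤ ∑ i, (he.eigenvalues i - 1) :=
        Finset.sum_le_sum h
    _ = (∑ i, he.eigenvalues i) - n := by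
        rw [Finset.sum_sub_distrib]; simp

private lemma posDef_diag_conj {n : ℕ} (r : Fin n → ℝ) (hr : ∀ i, r i ≠ 0)
    {C : Matrix (Fin n) (Fin n) ℝ} (hC : C.PosDef) :
    (Matrix.diagonal r * C * Matrix.diagonal r).PosDef := by
  have hRH : (Matrix.diagonal r)ᴴ = Matrix.diagonal r := by
    simp [Matrix.diagonal_conjTranspose]
  rw [Matrix.posDef_iff_dotProduct_mulVec]
  constructor
  · show _ = _
    simp only [Matrix.conjTranspose_mul, hRH, hC.isHermitian.eq, Matrix.mul_assoc]
  · intro x hx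
    have hne : Matrix.diagonal r *ᵥ x ≠ 0 := by
      intro h
      apply hx
      funext i
      have := congrFun h i
      rw [Matrix.mulVec_diagonal] at this
      simpa [hr i] using this
    have h2 := (Matrix.posDef_iff_dotProduct_mulVec.mp hC).2 hne
    nth_rewrite 1 [← hRH]
    simpa only [star_mulVec, dotProduct_mulVec, vecMul_vecMul] using h2

private lemma logdet_le_diag {n : ℕ} {b : Fin n → ℝ} (hb : ∀ i, 0 < b i)
    {C : Matrix (Fin n) (Fin n) ℝ} (hC : C.PosDef) :
    Real.log C.det ≤ (∑ i, Real.log (b i)) + ∑ i, (C i i - b i) / b i := by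
  set r : Fin n → ℝ := fun i => Real.sqrt (b i)⁻¹ with hrdef
  have hrpos : ∀ i, 0 < r i := fun i => Real.sqrt_pos.mpr (inv_pos.mpr (hb i))
  have hrsq : ∀ i, r i * r i = (b i)⁻¹ :=
    fun i => Real.mul_self_sqrt (le_of_lt (inv_pos.mpr (hb i)))
  have hM := posDef_diag_conj r (fun i => (hrpos i).ne') hC
  have hkey := logdet_le_trace hM
  have hdet : (Matrix.diagonal r * C * Matrix.diagonal r).det
      = (∏ i, r i) ^ 2 * C.det := by
    rw [Matrix.det_mul, Matrix.det_mul, Matrix.det_diagonal]; ring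
  have htr : (Matrix.diagonal r * C * Matrix.diagonal r).trace = ∑ i, C i i / b i := by
    rw [Matrix.trace]
    refine Finset.sum_congr rfl fun i _ => ?_
    simp only [Matrix.diag, Matrix.mul_diagonal, Matrix.diagonal_mul]
    rw [div_eq_mul_inv, ← hrsq i]; ring
  have hlogdet : Real.log ((∏ i, r i) ^ 2 * C.det)
      = -(∑ i, Real.log (b i)) + Real.log C.det := by
    rw [Real.log_mul (pow_ne_zero _ (Finset.prod_pos (fun i _ => hrpos i)).ne') hC.det_pos.ne',
      Real.log_pow,
      Real.log_prod (fun i _ => (hrpos i).ne')]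
    have h2 : ∀ i ∈ Finset.univ, Real.log (r i) = -(Real.log (b i) / 2) := by
      intro i _
      rw [hrdef]
      simp only []
      rw [Real.log_sqrt (le_of_lt (inv_pos.mpr (hb i))), Real.log_inv]
      ring
    rw [Finset.sum_congr rfl h2, Finset.sum_neg_distrib, ← Finset.sum_div]
    push_cast
    ring
  have hsum : ∑ i, (C i i - b i) / b i = (∑ i, C i i / b i) - n := by
    have h3 : ∀ i ∈ Finset.univ, (C i i - b i) / b i = C i i / b i - 1 := by
      intro i _
      rw [sub_div, div_self (hb i).ne']
    rw [Finset.sum_congr rfl h3, Finset.sum_sub_distrib]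
    simp
  rw [hdet, htr, hlogdet] at hkey
  linarith

private lemma psd_diag_nonneg {n : ℕ} {Z : Matrix (Fin n) (Fin n) ℝ} (hZ : Z.PosSemidef)
    (i : Fin n) : 0 ≤ Z i i := by
  have := (Matrix.posSemidef_iff_dotProduct_mulVec.mp hZ).2 (Pi.single i 1)
  simpa [dotProduct, Matrix.mulVec, Pi.single_apply] using this

private lemma scalar_step {l z : ℝ} (hl : 0 < l) (hz : 0 ≤ z) :
    (z - max ((1 - l)/l) 0) / (1 + max ((1 - l)/l) 0) ≤ l * (z - max ((1 - l)/l) 0) := by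
  rcases le_or_gt l 1 with h | h
  · have hp : max ((1 - l)/l) 0 = (1 - l)/l :=
      max_eq_left (div_nonneg (by linarith) hl.le)
    have h1 : 1 + (1 - l)/l = 1/l := by field_simp; ring
    rw [hp, h1, div_eq_mul_inv, one_div, inv_inv, mul_comm]
  · have hp : max ((1 - l)/l) 0 = 0 :=
      max_eq_right (div_nonpos_of_nonpos_of_nonneg (by linarith) hl.le)
    rw [hp]
    simp only [sub_zero, add_zero, div_one]
    nlinarith

private lemma key_ineq {n : ℕ} (lam : Fin n → ℝ) (hlam : ∀ i, 0 < lam i)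
    {Z : Matrix (Fin n) (Fin n) ℝ} (hZ : Z.PosSemidef) :
    -Real.log (Matrix.diagonal (fun i => max ((1 - lam i)/lam i) 0) + 1).det
        + ∑ i, lam i * (max ((1 - lam i)/lam i) 0) ≤
      -Real.log (Z + 1).det + ∑ i, lam i * Z i i := by
  set p : Fin n → ℝ := fun i => max ((1 - lam i)/lam i) 0 with hpdef
  have hppos : ∀ i, 0 ≤ p i := fun i => le_max_right _ _
  have hb : ∀ i, 0 < 1 + p i := fun i => by have := hppos i; linarith
  have hC : (Z + 1).PosDef := Matrix.PosDef.posSemidef_add hZ Matrix.PosDef.one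
  have h1 := logdet_le_diag (b := fun i => 1 + p i) hb hC
  have hdetP : (Matrix.diagonal p + 1).det = ∏ i, (1 + p i) := by
    rw [← Matrix.diagonal_one, Matrix.diagonal_add, Matrix.det_diagonal]
    exact Finset.prod_congr rfl fun i _ => by ring
  have hlogP : Real.log (Matrix.diagonal p + 1).det = ∑ i, Real.log (1 + p i) := by
    rw [hdetP, Real.log_prod (fun i _ => (hb i).ne')]
  have hstep : ∀ i ∈ Finset.univ, ((Z + 1) i i - (1 + p i)) / (1 + p i)
      ≤ lam i * Z i i - lam i * p i := by
    intro i _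
    have hz := psd_diag_nonneg hZ i
    have hs := scalar_step (hlam i) hz
    have hZ1 : (Z + 1) i i = Z i i + 1 := by
      simp [Matrix.add_apply, Matrix.one_apply_eq]
    rw [hZ1]
    calc (Z i i + 1 - (1 + p i)) / (1 + p i)
        = (Z i i - p i) / (1 + p i) := by congr 1; ring
      _ ≤ lam i * (Z i i - p i) := hs
      _ = lam i * Z i i - lam i * p i := by ring
  have h2 := Finset.sum_le_sum hstep
  have h3 : ∑ i, (lam i * Z i i - lam i * p i)
      = (∑ i, lam i * Z i i) - ∑ i, lam i * p i := Finset.sum_sub_distrib _ _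
  rw [hlogP]
  linarith [h1, h2, h3]

/-- Closed-form solution of `min_{X ⪰ 0} -log det(X+Sg) + ⟨A,X⟩` (Proposition 4.2).
`S` is the positive definite square root of `Sg`, and `S A S = Q Λ Qᵀ` is an
eigendecomposition with positive (nonincreasing) eigenvalues `lam`. The optimum
is `X* = S Q ψ(Λ) Qᵀ S` with `ψ(γ) = max{(1-γ)/γ, 0}`. -/
theorem logdet_prox_psd_closed_form {n : ℕ}
    (A Sg S Q : Matrix (Fin n) (Fin n) ℝ) (lam : Fin n → ℝ)
    (hA : A.PosDef) (hSg : Sg.PosDef)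
    (hS : S.PosDef) (hSsq : S * S = Sg)
    (hQ : Qᵀ * Q = 1)
    (heig : S * A * S = Q * Matrix.diagonal lam * Qᵀ)
    (hlam_pos : ∀ i, 0 < lam i)
    (hlam_mono : ∀ i j : Fin n, i ≤ j → lam j ≤ lam i) :
    let ψΛ : Matrix (Fin n) (Fin n) ℝ :=
      Matrix.diagonal fun i => max ((1 - lam i) / lam i) 0
    let Xstar := S * Q * ψΛ * Qᵀ * S
    Xstar.PosSemidef ∧
      ∀ X : Matrix (Fin n) (Fin n) ℝ, X.PosSemidef →
        -Real.log (Xstar + Sg).det + (A * Xstar).trace ≤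
          -Real.log (X + Sg).det + (A * X).trace := by
  intro ψΛ Xstar
  have hΛ : ψΛ = Matrix.diagonal fun i => max ((1 - lam i) / lam i) 0 := rfl
  have hXs : Xstar = S * Q * ψΛ * Qᵀ * S := rfl
  have hST : Sᵀ = S := by
    rw [← Matrix.conjTranspose_eq_transpose_of_trivial]; exact hS.isHermitian.eq
  have hSdet_ne : S.det ≠ 0 := hS.det_pos.ne'
  have hSinv1 : S * S⁻¹ = 1 := Matrix.mul_nonsing_inv S hSdet_ne.isUnit
  have hSinv2 : S⁻¹ * S = 1 := Matrix.nonsing_inv_mul S hSdet_ne.isUnit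
  have hSinvT : (S⁻¹)ᵀ = S⁻¹ := by rw [Matrix.transpose_nonsing_inv, hST]
  have hQQT : Q * Qᵀ = 1 := mul_eq_one_comm.mp hQ
  have hQdet : Q.det * Q.det = 1 := by
    have := congrArg Matrix.det hQ
    rwa [Matrix.det_mul, Matrix.det_transpose, Matrix.det_one] at this
  have hexp : ∀ W : Matrix (Fin n) (Fin n) ℝ,
      S * Q * W * Qᵀ * S + Sg = S * Q * (W + 1) * Qᵀ * S := by
    intro W
    have e1 : S * Q * (W + 1) = S * Q * W + S * Q := by rw [mul_add, mul_one]
    rw [e1, add_mul, add_mul]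
    congr 1
    rw [Matrix.mul_assoc S Q Qᵀ, hQQT, mul_one, hSsq]
  have hdet : ∀ W : Matrix (Fin n) (Fin n) ℝ,
      (S * Q * (W + 1) * Qᵀ * S).det = S.det ^ 2 * (W + 1).det := by
    intro W
    rw [Matrix.det_mul, Matrix.det_mul, Matrix.det_mul, Matrix.det_mul,
      Matrix.det_transpose]
    linear_combination (S.det ^ 2 * (W + 1).det) * hQdet
  have htr : ∀ W : Matrix (Fin n) (Fin n) ℝ,
      (A * (S * Q * W * Qᵀ * S)).trace = ∑ i, lam i * W i i := by
    intro W
    have e1 : A * (S * Q * W * Qᵀ * S) = A * (S * Q * W * Qᵀ) * S := by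
      simp only [Matrix.mul_assoc]
    rw [e1, Matrix.trace_mul_cycle]
    have e2 : S * A * (S * Q * W * Qᵀ)
        = Q * Matrix.diagonal lam * (Qᵀ * Q) * W * Qᵀ := by
      calc S * A * (S * Q * W * Qᵀ)
          = (S * A * S) * (Q * W * Qᵀ) := by simp only [Matrix.mul_assoc]
        _ = (Q * Matrix.diagonal lam * Qᵀ) * (Q * W * Qᵀ) := by rw [heig]
        _ = Q * Matrix.diagonal lam * (Qᵀ * Q) * W * Qᵀ := by
            simp only [Matrix.mul_assoc]
    rw [e2, hQ, mul_one, Matrix.trace_mul_comm]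
    have e3 : Qᵀ * (Q * Matrix.diagonal lam * W) = Matrix.diagonal lam * W := by
      simp only [← Matrix.mul_assoc]
      rw [hQ, one_mul]
    rw [e3, Matrix.trace]
    exact Finset.sum_congr rfl fun i _ => by simp [Matrix.diag, Matrix.diagonal_mul]
  have hobj : ∀ W : Matrix (Fin n) (Fin n) ℝ, W.PosSemidef →
      -Real.log (S * Q * W * Qᵀ * S + Sg).det + (A * (S * Q * W * Qᵀ * S)).trace
        = -(2 * Real.log S.det) - Real.log (W + 1).det + ∑ i, lam i * W i i := by
    intro W hW
    have hWdet : 0 < (W + 1).det :=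
      (Matrix.PosDef.posSemidef_add hW Matrix.PosDef.one).det_pos
    rw [hexp W, hdet W, htr W,
      Real.log_mul (pow_ne_zero 2 hSdet_ne) hWdet.ne', Real.log_pow]
    push_cast
    ring
  have hpsdψ : ψΛ.PosSemidef := by
    rw [hΛ]
    exact Matrix.posSemidef_diagonal_iff.mpr fun i => le_max_right _ _
  constructor
  · have h := hpsdψ.mul_mul_conjTranspose_same (S * Q)
    have e : (S * Q)ᴴ = Qᵀ * S := by
      rw [Matrix.conjTranspose_mul, Matrix.conjTranspose_eq_transpose_of_trivial,
        Matrix.conjTranspose_eq_transpose_of_trivial, hST]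
    rw [e] at h
    have e2 : S * Q * ψΛ * (Qᵀ * S) = Xstar := by
      rw [hXs]; simp only [Matrix.mul_assoc]
    rwa [e2] at h
  · intro X hX
    set Z := Qᵀ * S⁻¹ * X * (S⁻¹ * Q) with hZdef
    have hZpsd : Z.PosSemidef := by
      have h := hX.conjTranspose_mul_mul_same (S⁻¹ * Q)
      have e : (S⁻¹ * Q)ᴴ = Qᵀ * S⁻¹ := by
        rw [Matrix.conjTranspose_mul, Matrix.conjTranspose_eq_transpose_of_trivial,
          Matrix.conjTranspose_eq_transpose_of_trivial, hSinvT]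
      rwa [e] at h
    have hXrec : X = S * Q * Z * Qᵀ * S := by
      rw [hZdef]
      simp only [← Matrix.mul_assoc]
      rw [Matrix.mul_assoc S Q Qᵀ, hQQT, mul_one, hSinv1, one_mul,
        Matrix.mul_assoc (X * S⁻¹) Q Qᵀ, hQQT, mul_one,
        Matrix.mul_assoc X S⁻¹ S, hSinv2, mul_one]
    have h1 := hobj ψΛ hpsdψ
    have h2 := hobj Z hZpsd
    have hkey := key_ineq lam hlam_pos hZpsd
    rw [← hΛ] at hkey
    have hψii : ∑ i, lam i * ψΛ i i
        = ∑ i, lam i * (max ((1 - lam i) / lam i) 0) := by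
      refine Finset.sum_congr rfl fun i _ => ?_
      rw [hΛ, Matrix.diagonal_apply_eq]
    rw [hXrec, hXs]
    rw [h1, h2]
    rw [hψii] at h1 ⊢
    linarith [hkey]
end
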